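/- arXiv:2103.08391 — 2 statements merged into one kernel-verified Lean document; each statement's English description precedes it below -/
import Mathlib

section
/- For any FOND problem P and any policy π: π is a strong-cyclic solution of P if and only if π solves the FOND+ problem ⟨P, {A/∅}⟩, where A is the set of all non-deterministic actions of P (actions a such that |F(a,s)| ≥ 2 for some state s) and the B-part of the constraint is empty. -/
namespace FondPaper

/-- A FOND model: initial state, goal states, and transition function
`F a s` giving the set of possible successor states of action `a` in state `s`. -/
structure FOND (S A : Type) where
  init : S
  goal : Set S
  F : A → S → Set S

variable {S A V : Type}

/-- Action `a` is applicable in `s` iff it has some successor. -/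
def FOND.Applicable (P : FOND S A) (a : A) (s : S) : Prop := (P.F a s).Nonempty

/-- A policy is a partial function mapping non-goal states into actions. -/
def IsPolicy (P : FOND S A) (π : S → Option A) : Prop := ∀ s ∈ P.goal, π s = none

/-- A (finite or infinite) trajectory: `len = some n` means the trajectory is
`states 0, …, states n`; `len = none` means it is infinite. -/
structure Traj (S : Type) where
  states : ℕ → S
  len : Option ℕ

/-- Index `i` is within the trajectory. -/
def Traj.Inside (τ : Traj S) (i : ℕ) : Prop := ∀ n, τ.len = some n → i ≤ n

/-- There is a step from index `i` to `i+1` in the trajectory. -/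
def Traj.HasStep (τ : Traj S) (i : ℕ) : Prop := ∀ n, τ.len = some n → i < n

/-- `τ` is a π-trajectory of `P`. -/
def IsTraj (P : FOND S A) (π : S → Option A) (τ : Traj S) : Prop :=
  τ.states 0 = P.init ∧
  ∀ i, τ.HasStep i → ∃ a, π (τ.states i) = some a ∧ τ.states (i + 1) ∈ P.F a (τ.states i)

/-- Maximal trajectory: infinite, or finite ending in the first goal state,
or in a state where the policy is undefined or prescribes an inapplicable action. -/
def MaximalTraj (P : FOND S A) (π : S → Option A) (τ : Traj S) : Prop :=
  τ.len = none ∨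
  ∃ n, τ.len = some n ∧
    ((τ.states n ∈ P.goal ∧ ∀ i < n, τ.states i ∉ P.goal) ∨
     π (τ.states n) = none ∨
     (∃ a, π (τ.states n) = some a ∧ ¬ P.Applicable a (τ.states n)))

/-- The trajectory reaches a goal state. -/
def ReachesGoal (P : FOND S A) (τ : Traj S) : Prop :=
  ∃ i, τ.Inside i ∧ τ.states i ∈ P.goal

/-- `s` is recurrent in `τ`: the trajectory is infinite and `s` occurs infinitely often. -/
def RecurrentIn (τ : Traj S) (s : S) : Prop :=
  τ.len = none ∧ {i | τ.states i = s}.Infinite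

/-- One policy step: `s'` is a possible successor of `s` under the policy. -/
def PStep (P : FOND S A) (π : S → Option A) (s s' : S) : Prop :=
  ∃ a, π s = some a ∧ s' ∈ P.F a s

/-- The policy reaches `s'` from `s`. -/
def ReachesFrom (P : FOND S A) (π : S → Option A) : S → S → Prop :=
  Relation.ReflTransGen (PStep P π)

/-- `s` is reached by the policy: some finite π-trajectory ends at `s`. -/
def ReachedBy (P : FOND S A) (π : S → Option A) (s : S) : Prop :=
  ∃ τ : Traj S, IsTraj P π τ ∧ ∃ n, τ.len = some n ∧ τ.states n = s

/-- Strong-cyclic solution: a goal is reachable via π from every state reached by π. -/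
def StrongCyclic (P : FOND S A) (π : S → Option A) : Prop :=
  ∀ s, ReachedBy P π s → ∃ g ∈ P.goal, ReachesFrom P π s g

/-- Strong solution: every maximal π-trajectory reaches a goal state. -/
def Strong (P : FOND S A) (π : S → Option A) : Prop :=
  ∀ τ : Traj S, IsTraj P π τ → MaximalTraj P π τ → ReachesGoal P τ

/-- Fairness when all actions are fair: each recurrent state is immediately
followed by each of its possible successors infinitely often.
(Finite trajectories have no recurrent states, hence are fair.) -/
def FairAll (P : FOND S A) (π : S → Option A) (τ : Traj S) : Prop :=
  ∀ s, RecurrentIn τ s → ∀ a, π s = some a → ∀ s' ∈ P.F a s,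
    {i | τ.states i = s ∧ τ.states (i + 1) = s'}.Infinite

/-- The policy is acyclic: no π-trajectory visits the same state more than once. -/
def AcyclicPolicy (P : FOND S A) (π : S → Option A) : Prop :=
  ∀ τ : Traj S, IsTraj P π τ → ∀ i j, τ.Inside i → τ.Inside j →
    τ.states i = τ.states j → i = j

/-- The non-deterministic actions of `P`: those with at least two possible
successors in some state. -/
def NonDetActs (P : FOND S A) : Set A :=
  {a | ∃ s s₁ s₂, s₁ ∈ P.F a s ∧ s₂ ∈ P.F a s ∧ s₁ ≠ s₂}

/-- The occurrence of the action `π s` at recurrent state `s` of trajectory `τ`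
is fair: for some constraint `(A, B) ∈ C`, `π s ∈ A` and actions from `B`
occur only finitely often along `τ`. -/
def FairOcc (C : Set (Set A × Set A)) (π : S → Option A) (τ : Traj S) (s : S) : Prop :=
  ∃ c ∈ C, (∃ a, π s = some a ∧ a ∈ c.1) ∧
    ∀ b ∈ c.2, {i | π (τ.states i) = some b}.Finite

/-- `τ` is fair for the FOND+ problem `⟨P, C⟩`. -/
def FairPlus (P : FOND S A) (C : Set (Set A × Set A)) (π : S → Option A) (τ : Traj S) : Prop :=
  ∀ s, RecurrentIn τ s → FairOcc C π τ s → ∀ a, π s = some a → ∀ s' ∈ P.F a s,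
    {i | τ.states i = s ∧ τ.states (i + 1) = s'}.Infinite

/-- `π` solves the FOND+ problem `⟨P, C⟩`. -/
def SolvesPlus (P : FOND S A) (C : Set (Set A × Set A)) (π : S → Option A) : Prop :=
  ∀ τ : Traj S, IsTraj P π τ → MaximalTraj P π τ → FairPlus P C π τ → ReachesGoal P τ

/-- Well-formed set of fairness constraints: finite, each `A`-part a set of
non-deterministic actions and each `B`-part disjoint from the `A`-part. -/
def WellFormedC (P : FOND S A) (C : Set (Set A × Set A)) : Prop :=
  C.Finite ∧ ∀ c ∈ C, c.1 ⊆ NonDetActs P ∧ Disjoint c.1 c.2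

/-- A cycle on `s` w.r.t. policy `π`: a sequence `s = t 0, …, t k = s` with `k ≥ 1`,
each `t i` (`i < k`) non-goal with `π` defined and `t (i+1)` a possible successor. -/
def CycleOn (P : FOND S A) (π : S → Option A) (s : S) (t : ℕ → S) (k : ℕ) : Prop :=
  1 ≤ k ∧ t 0 = s ∧ t k = s ∧
    ∀ i < k, t i ∉ P.goal ∧ ∃ a, π (t i) = some a ∧ t (i + 1) ∈ P.F a (t i)

/-- `s` is fair-for-`T`: for some `(A, B) ∈ C`, `π s ∈ A` and every cycle on `s`
containing a state where `π` prescribes a `B`-action also contains a state in `T`. -/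
def FairFor (P : FOND S A) (C : Set (Set A × Set A)) (π : S → Option A)
    (T : Set S) (s : S) : Prop :=
  ∃ c ∈ C, (∃ a, π s = some a ∧ a ∈ c.1) ∧
    ∀ t k, CycleOn P π s t k →
      (∃ i ≤ k, ∃ b, π (t i) = some b ∧ b ∈ c.2) → ∃ j ≤ k, t j ∈ T

/-- `T` is closed under the FOND+ termination rules. -/
def TermClosed (P : FOND S A) (C : Set (Set A × Set A)) (π : S → Option A) (T : Set S) : Prop :=
  P.goal ⊆ T ∧
  (∀ s a, π s = some a → FairFor P C π T s → (∃ s' ∈ P.F a s, s' ∈ T) → s ∈ T) ∧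
  (∀ s a, π s = some a → ¬ FairFor P C π T s → (P.F a s).Nonempty →
    (∀ s' ∈ P.F a s, s' ∈ T) → s ∈ T)

/-- `s` is terminating for `π` in `⟨P, C⟩`: it belongs to the least set closed
under the FOND+ termination rules. -/
def Terminating (P : FOND S A) (C : Set (Set A × Set A)) (π : S → Option A) (s : S) : Prop :=
  ∀ T : Set S, TermClosed P C π T → s ∈ T

/-- The operator `Φ` of the FOND+ termination computation. -/
def Phi (P : FOND S A) (C : Set (Set A × Set A)) (π : S → Option A) (T : Set S) : Set S :=
  P.goal ∪
  {s | ∃ a, π s = some a ∧ FairFor P C π T s ∧ ∃ s' ∈ P.F a s, s' ∈ T} ∪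
  {s | ∃ a, π s = some a ∧ (P.F a s).Nonempty ∧ P.F a s ⊆ T}

/-- The policy graph of `P` and `π`: edges `(s, s')` for non-goal reachable `s`
with `π s` defined and `s'` a possible successor. -/
def PolicyEdges (P : FOND S A) (π : S → Option A) : Set (S × S) :=
  {e | ReachesFrom P π P.init e.1 ∧ e.1 ∉ P.goal ∧ PStep P π e.1 e.2}

/-- Path (of length ≥ 0) in a graph given by its edge set. -/
def GPath (G : Set (S × S)) : S → S → Prop :=
  Relation.ReflTransGen (fun x y => (x, y) ∈ G)

/-- Edge `e = (s, s')` of `G` is removable by Sieve: `π s` decrements some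
variable `x` not incremented at any state lying on a path in `G` from `s'` back to `s`. -/
def Removable (π : S → Option A) (decs incs : A → Set V) (G : Set (S × S)) (e : S × S) : Prop :=
  e ∈ G ∧ ∃ x : V, (∃ a, π e.1 = some a ∧ x ∈ decs a) ∧
    ∀ w, GPath G e.2 w → GPath G w e.1 → ∀ a, π w = some a → x ∉ incs a

/-- One Sieve edge-removal step. -/
def SieveStep (π : S → Option A) (decs incs : A → Set V) (G G' : Set (S × S)) : Prop :=
  ∃ e, Removable π decs incs G e ∧ G' = G \ {e}

/-- Graph acyclicity: no nonempty path from a state back to itself. -/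
def GAcyclic (G : Set (S × S)) : Prop :=
  ∀ s s', (s, s') ∈ G → ¬ GPath G s' s

/-- A cycle on `s` in a graph given by its edge set. -/
def ECycleOn (E : Set (S × S)) (s : S) (t : ℕ → S) (k : ℕ) : Prop :=
  1 ≤ k ∧ t 0 = s ∧ t k = s ∧ ∀ i < k, (t i, t (i + 1)) ∈ E

/-- `T` is closed under the QNP termination rules. -/
def QNPClosed (P : FOND S A) (π : S → Option A) (decs incs : A → Set V) (T : Set S) : Prop :=
  ∀ s, ReachesFrom P π P.init s →
    ((¬ ∃ t k, ECycleOn (PolicyEdges P π) s t k) ∨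
     (∀ t k, ECycleOn (PolicyEdges P π) s t k → ∃ j ≤ k, t j ∈ T) ∨
     (∃ x, (∃ a, π s = some a ∧ x ∈ decs a) ∧
        ∀ t k, ECycleOn (PolicyEdges P π) s t k →
          (∃ i ≤ k, ∃ a, π (t i) = some a ∧ x ∈ incs a) → ∃ j ≤ k, t j ∈ T)) →
    s ∈ T

/-- `s` is QNP-terminating: it belongs to the least set closed under the QNP
termination rules. -/
def QNPTerm (P : FOND S A) (π : S → Option A) (decs incs : A → Set V) (s : S) : Prop :=
  ∀ T : Set S, QNPClosed P π decs incs T → s ∈ T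

/-- `T` is closed under the Dual-FOND termination rules. -/
def DualClosed (P : FOND S A) (fair : A → Prop) (π : S → Option A) (T : Set S) : Prop :=
  P.goal ⊆ T ∧
  (∀ s a, π s = some a → fair a → (∃ s' ∈ P.F a s, s' ∈ T) → s ∈ T) ∧
  (∀ s a, π s = some a → ¬ fair a → (P.F a s).Nonempty →
    (∀ s' ∈ P.F a s, s' ∈ T) → s ∈ T)

/-- `s` is Dual-FOND terminating. -/
def DualTerm (P : FOND S A) (fair : A → Prop) (π : S → Option A) (s : S) : Prop :=
  ∀ T : Set S, DualClosed P fair π T → s ∈ T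

/-- `π` solves the Dual FOND problem `(P, fair)`. -/
def SolvesDual [Fintype S] (P : FOND S A) (fair : A → Prop) (π : S → Option A) : Prop :=
  (∀ s, ReachedBy P π s → s ∉ P.goal → ∃ a, π s = some a ∧ (P.F a s).Nonempty) ∧
  ∃ d : S → ℕ,
    (∀ s, ReachedBy P π s → d s ≤ Fintype.card S) ∧
    (∀ s, ReachedBy P π s → s ∈ P.goal → d s = 0) ∧
    (∀ s a, ReachedBy P π s → π s = some a →
      (fair a → ∃ s' ∈ P.F a s, d s' < d s) ∧
      (¬ fair a → ∀ s' ∈ P.F a s, d s' < d s))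

end FondPaper

open FondPaper

/-!
Under the constraint `A/∅` every non-deterministic action is fair at every recurrent state, and a
deterministic one always leads to the same successor, so the recurrent states of a fair infinite
trajectory are closed under policy steps: a goal reachable from a recurrent state is visited.
Conversely, from a reached state `s` some dead end must be reachable; otherwise the run that leaves
each state `u` for the `k`-th entry of an enumeration of its successors (each one repeated
infinitely often) on its `k`-th visit to `u` is a fair infinite trajectory through `s`, which never
meets a goal because goals are dead ends of a policy. A finite trajectory into that dead end is
maximal and fair, so it ends in a goal.
-/

open Relation

section FairRun

variable {S : Type} {R : S → S → Prop}

theorem Relation.ReflTransGen.exists_seq {a b : S} (h : ReflTransGen R a b) :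
    ∃ n, ∃ t : ℕ → S, t 0 = a ∧ t n = b ∧ ∀ i < n, R (t i) (t (i + 1)) := by
  induction h with
  | refl => exact ⟨0, fun _ => a, rfl, rfl, fun i hi => absurd hi (Nat.not_lt_zero i)⟩
  | @tail b c _ hbc ih =>
    obtain ⟨n, t, h0, hn, ht⟩ := ih
    refine ⟨n + 1, fun i => if i ≤ n then t i else c, by simpa using h0, by simp, fun i hi => ?_⟩
    rcases Nat.lt_or_eq_of_le (Nat.lt_succ_iff.mp hi) with hi | rfl
    · simpa [hi.le, Nat.succ_le_of_lt hi] using ht i hi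
    · simpa [hn] using hbc

theorem Set.Nonempty.exists_seq_infinitely_often {α : Type*} [Countable α] {s : Set α}
    (hs : s.Nonempty) : ∃ f : ℕ → α, (∀ k, f k ∈ s) ∧ ∀ v ∈ s, {k | f k = v}.Infinite := by
  have : Nonempty s := hs.to_subtype
  obtain ⟨g, hg⟩ := exists_surjective_nat s
  refine ⟨fun k => g k.unpair.1, fun k => (g _).2, fun v hv => ?_⟩
  obtain ⟨m, hm⟩ := hg ⟨v, hv⟩
  refine Set.infinite_of_injective_forall_mem (f := Nat.pair m)
    (fun i j hij => by simpa using congrArg (fun k => k.unpair.2) hij) fun j => ?_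
  simp [hm]

def IsFairSeq (R : S → S → Prop) (x : ℕ → S) : Prop :=
  ∀ u v, R u v → {j | x j = u}.Infinite → {j | x j = u ∧ x (j + 1) = v}.Infinite

theorem IsFairSeq.of_shift {x y : ℕ → S} {n : ℕ} (hy : IsFairSeq R y)
    (hxy : ∀ j, x (j + n) = y j) : IsFairSeq R x := by
  intro u v huv hu
  have hyu : {j | y j = u}.Infinite := fun hfin => hu <|
    ((Set.finite_Iio n).union (hfin.image (· + n))).subset fun i hi => by
      rcases lt_or_ge i n with h | h
      · exact Or.inl h
      · exact Or.inr ⟨i - n, by simpa [← hxy, Nat.sub_add_cancel h] using hi, Nat.sub_add_cancel h⟩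
  refine ((hy u v huv hyu).image (add_left_injective n).injOn).mono ?_
  rintro _ ⟨j, ⟨hj, hj'⟩, rfl⟩
  exact ⟨(hxy j).trans hj, by rw [add_right_comm, hxy]; exact hj'⟩

/-- The run from `s` that leaves a state `u` for `nxt u k` on its `k`-th visit to `u`, paired with
the number of visits to each state before the current time. -/
def visitRun [DecidableEq S] (nxt : S → ℕ → S) (s : S) : ℕ → S × (S → ℕ)
  | 0 => (s, 0)
  | j + 1 =>
    let u := (visitRun nxt s j).1
    let c := (visitRun nxt s j).2
    (nxt u (c u), Function.update c u (c u + 1))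

theorem visitRun_snd [DecidableEq S] (nxt : S → ℕ → S) (s u : S) (j : ℕ) :
    (visitRun nxt s j).2 u = Nat.count (fun i => (visitRun nxt s i).1 = u) j := by
  induction j with
  | zero => rfl
  | succ j ih =>
    rw [Nat.count_succ, ← ih]
    change Function.update _ _ _ u = _
    rcases eq_or_ne (visitRun nxt s j).1 u with h | h
    · simp [h]
    · simp [h, h.symm]

theorem infinite_visitRun_transitions [DecidableEq S] {nxt : S → ℕ → S} {s u v : S}
    (hu : {j | (visitRun nxt s j).1 = u}.Infinite) (hv : {k | nxt u k = v}.Infinite) :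
    {j | (visitRun nxt s j).1 = u ∧ (visitRun nxt s (j + 1)).1 = v}.Infinite := by
  refine (hv.image (Nat.nth_injective hu).injOn).mono ?_
  rintro _ ⟨k, hk, rfl⟩
  have hvisit := Nat.nth_mem_of_infinite hu k
  refine ⟨hvisit, ?_⟩
  change nxt _ ((visitRun nxt s _).2 _) = v
  rw [visitRun_snd, hvisit, Nat.count_nth_of_infinite hu]
  exact hk

theorem exists_fair_run [Countable S] {s : S}
    (hlive : ∀ u, ReflTransGen R s u → ∃ v, R u v) :
    ∃ x : ℕ → S, x 0 = s ∧ (∀ j, R (x j) (x (j + 1))) ∧ IsFairSeq R x := by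
  classical
  have hnxt : ∀ u, ∃ f : ℕ → S,
      (∃ v, R u v) → (∀ k, R u (f k)) ∧ ∀ v, R u v → {k | f k = v}.Infinite := by
    intro u
    by_cases hu : ∃ v, R u v
    · obtain ⟨f, hf, hf'⟩ := Set.Nonempty.exists_seq_infinitely_often (s := {v | R u v}) hu
      exact ⟨f, fun _ => ⟨hf, hf'⟩⟩
    · exact ⟨fun _ => u, fun h => absurd h hu⟩
  choose nxt hnxt using hnxt
  have hreach : ∀ j, ReflTransGen R s (visitRun nxt s j).1 := by
    intro j
    induction j with
    | zero => exact .refl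
    | succ j ih => exact ih.tail ((hnxt _ (hlive _ ih)).1 _)
  refine ⟨fun j => (visitRun nxt s j).1, rfl, fun j => (hnxt _ (hlive _ (hreach j))).1 _, ?_⟩
  intro u v huv hu
  obtain ⟨i, rfl⟩ := hu.nonempty
  exact infinite_visitRun_transitions hu ((hnxt _ (hlive _ (hreach i))).2 v huv)

theorem Relation.ReflTransGen.exists_fair_run [Countable S] {a b : S}
    (hab : ReflTransGen R a b) (hlive : ∀ u, ReflTransGen R b u → ∃ v, R u v) :
    ∃ x : ℕ → S, x 0 = a ∧ (∀ j, R (x j) (x (j + 1))) ∧ IsFairSeq R x := by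
  obtain ⟨n, p, hp0, hpn, hp⟩ := hab.exists_seq
  obtain ⟨y, hy0, hy, hfair⟩ := _root_.exists_fair_run hlive
  let x i := if i < n then p i else y (i - n)
  have hxp : ∀ i ≤ n, x i = p i := fun i hi => by
    rcases hi.lt_or_eq with hi | rfl
    · simp [x, hi]
    · simp [x, hy0, hpn]
  have hxy : ∀ j, x (j + n) = y j := fun j => by simp [x]
  refine ⟨x, by rw [hxp 0 (Nat.zero_le n), hp0], fun i => ?_, hfair.of_shift hxy⟩
  rcases lt_or_ge i n with hi | hi
  · rw [hxp i hi.le, hxp (i + 1) hi]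
    exact hp i hi
  · obtain ⟨j, rfl⟩ := Nat.exists_eq_add_of_le' hi
    rw [add_right_comm, hxy, hxy]
    exact hy j

end FairRun

namespace FondPaper

variable {S A : Type} {P : FOND S A} {π : S → Option A} {τ : Traj S} {s u v : S}

theorem forall_not_pStep_iff :
    (∀ v, ¬ PStep P π s v) ↔ π s = none ∨ ∃ a, π s = some a ∧ ¬ P.Applicable a s := by
  cases h : π s <;> simp [PStep, FOND.Applicable, Set.Nonempty, h]

theorem IsPolicy.notMem_goal (hπ : IsPolicy P π) (h : PStep P π s v) : s ∉ P.goal := by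
  obtain ⟨a, ha, -⟩ := h
  exact fun hs => by simp [hπ s hs] at ha

theorem ReachedBy.reachesFrom_init (h : ReachedBy P π s) : ReachesFrom P π P.init s := by
  obtain ⟨τ, ⟨h0, hstep⟩, n, hn, rfl⟩ := h
  suffices ∀ i ≤ n, ReachesFrom P π P.init (τ.states i) from this n le_rfl
  intro i hi
  induction i with
  | zero => exact h0 ▸ .refl
  | succ i ih =>
    exact (ih (by omega)).tail (hstep i fun m hm => by rw [hn, Option.some_inj] at hm; omega)

theorem RecurrentIn.of_pStep (hτ : IsTraj P π τ)
    (hfair : FairPlus P {(NonDetActs P, ∅)} π τ) (hu : RecurrentIn τ u) (huv : PStep P π u v) :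
    RecurrentIn τ v := by
  obtain ⟨a, ha, hv⟩ := huv
  suffices h : {i | τ.states i = u ∧ τ.states (i + 1) = v}.Infinite from
    ⟨hu.1, (h.image (add_left_injective 1).injOn).mono (by rintro _ ⟨i, hi, rfl⟩; exact hi.2)⟩
  by_cases hnd : a ∈ NonDetActs P
  · have hocc : FairOcc {(NonDetActs P, ∅)} π τ u :=
      ⟨_, Set.mem_singleton _, ⟨a, ha, hnd⟩, fun b hb => absurd hb (Set.notMem_empty b)⟩
    exact hfair u hu hocc a ha v hv
  · refine hu.2.mono fun i hi => ⟨hi, ?_⟩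
    obtain ⟨a', ha', hi'⟩ := hτ.2 i fun m hm => by simp [hu.1] at hm
    rw [hi, ha, Option.some_inj] at ha'
    subst ha'
    by_contra hne
    exact hnd ⟨u, _, _, hi ▸ hi', hv, hne⟩

theorem RecurrentIn.of_reachesFrom (hτ : IsTraj P π τ)
    (hfair : FairPlus P {(NonDetActs P, ∅)} π τ) (hu : RecurrentIn τ u)
    (huv : ReachesFrom P π u v) : RecurrentIn τ v := by
  induction huv with
  | refl => exact hu
  | tail _ hvw ih => exact ih.of_pStep hτ hfair hvw

theorem Traj.exists_recurrentIn [Finite S] (h : τ.len = none) : ∃ u, RecurrentIn τ u := by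
  obtain ⟨u, hu⟩ := Finite.exists_infinite_fiber τ.states
  exact ⟨u, h, Set.infinite_coe_iff.mp hu⟩

theorem StrongCyclic.solvesPlus [Finite S] (h : StrongCyclic P π) :
    SolvesPlus P {(NonDetActs P, ∅)} π := by
  intro τ hτ hmax hfair
  rcases hmax with hinf | ⟨n, hn, hgoal | hdead⟩
  · obtain ⟨u, hu⟩ := Traj.exists_recurrentIn hinf
    obtain ⟨i, hi⟩ := hu.2.nonempty
    have hreached : ReachedBy P π u :=
      ⟨⟨τ.states, some i⟩, ⟨hτ.1, fun j _ => hτ.2 j fun m hm => by simp [hinf] at hm⟩, i, rfl, hi⟩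
    obtain ⟨g, hg, hug⟩ := h u hreached
    obtain ⟨j, hj⟩ := (hu.of_reachesFrom hτ hfair hug).2.nonempty
    exact ⟨j, by simp [Traj.Inside, hinf], hj ▸ hg⟩
  · exact ⟨n, by simp [Traj.Inside, hn], hgoal.1⟩
  · obtain ⟨g, hg, hng⟩ := h _ ⟨τ, hτ, n, hn, rfl⟩
    rw [ReachesFrom, reflTransGen_iff_eq (forall_not_pStep_iff.mpr hdead)] at hng
    exact ⟨n, by simp [Traj.Inside, hn], hng ▸ hg⟩

variable {C : Set (Set A × Set A)}

theorem SolvesPlus.mem_goal_of_forall_not_pStep (h : SolvesPlus P C π) (hπ : IsPolicy P π)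
    (hu : ReachesFrom P π P.init u) (hdead : ∀ v, ¬ PStep P π u v) : u ∈ P.goal := by
  obtain ⟨m, t, h0, hm, ht⟩ := ReflTransGen.exists_seq hu
  subst hm
  obtain ⟨i, hi, hg⟩ := h ⟨t, some m⟩ ⟨h0, fun i hi => ht i (by simpa [Traj.HasStep] using hi)⟩
    (Or.inr ⟨m, rfl, Or.inr (forall_not_pStep_iff.mp hdead)⟩)
    (fun _ hrec => absurd hrec.1 (by simp))
  rcases (show i ≤ m by simpa [Traj.Inside] using hi).lt_or_eq with hlt | rfl
  · exact absurd hg (hπ.notMem_goal (ht i hlt))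
  · exact hg

theorem SolvesPlus.exists_reachesFrom_forall_not_pStep [Countable S] (h : SolvesPlus P C π)
    (hπ : IsPolicy P π) (hs : ReachesFrom P π P.init s) :
    ∃ u, ReachesFrom P π s u ∧ ∀ v, ¬ PStep P π u v := by
  by_contra! hlive
  obtain ⟨x, hx0, hx, hfair⟩ := ReflTransGen.exists_fair_run hs hlive
  obtain ⟨i, -, hi⟩ := h ⟨x, none⟩ ⟨hx0, fun i _ => hx i⟩ (Or.inl rfl)
    fun u hu _ a ha v hv => hfair u v ⟨a, ha, hv⟩ hu.2
  exact hπ.notMem_goal (hx i) hi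

theorem SolvesPlus.strongCyclic [Countable S] (h : SolvesPlus P C π) (hπ : IsPolicy P π) :
    StrongCyclic P π := by
  intro s hs
  obtain ⟨u, hsu, hu⟩ := h.exists_reachesFrom_forall_not_pStep hπ hs.reachesFrom_init
  exact ⟨u, h.mem_goal_of_forall_not_pStep hπ (hs.reachesFrom_init.trans hsu) hu, hsu⟩

end FondPaper

theorem stmt4_general (S A : Type) [Finite S] (P : FOND S A)
    (π : S → Option A) (hπ : IsPolicy P π) :
    StrongCyclic P π ↔
      SolvesPlus P ({(NonDetActs P, (∅ : Set A))} : Set (Set A × Set A)) π :=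
  ⟨StrongCyclic.solvesPlus, fun h => h.strongCyclic hπ⟩

/-- π is a strong-cyclic solution of P iff π solves the FOND+ problem
⟨P, {A/∅}⟩ where A is the set of all non-deterministic actions of P. -/
theorem stmt4 (S A : Type) [Finite S] [Finite A] (P : FOND S A) (hgoal : P.goal.Nonempty)
    (π : S → Option A) (hπ : IsPolicy P π) :
    StrongCyclic P π ↔
      SolvesPlus P ({(NonDetActs P, (∅ : Set A))} : Set (Set A × Set A)) π :=
  stmt4_general S A P π hπ
end

section
/- For any FOND problem P, policy π, and decrement/increment labeling of the actions: the Sieve procedure accepts the policy graph G(P, π) (i.e., the graph obtained when no further edge removals are possible is acyclic) if and only if the policy π terminates, i.e., every state reachable by π is QNP-terminating. -/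
open FondPaper

/-!
If `T` is closed under the QNP rules, Sieve never deletes an edge `(u, v)` lying on a cycle of
the policy graph that avoids `T`: since `u ∉ T`, rule (3) fails at `u` for the variable that
`π u` decrements, which yields a `T`-avoiding cycle through `u` with a state incrementing it, and
that state lies on a path from `v` back to `u`. Hence an acyclic final graph leaves no
`T`-avoiding cycle, and rule (2) puts every reachable state in `T`.

Conversely, if no edge of the final graph can be removed, the states lying on none of its cycles
form a QNP-closed set: at a state `u` on a cycle, the edge leaving `u` cannot be removed, so for
each variable decremented at `u` some cycle through `u` increments it, and all states of a cycle
of the final graph again lie on cycles.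
-/

namespace FondPaper

variable {S A V : Type}

section Graph

variable {G H : Set (S × S)}

theorem GPath.mono {a b : S} (hGH : G ⊆ H) (h : GPath G a b) : GPath H a b :=
  Relation.ReflTransGen.mono (fun _ _ h => hGH h) _ _ h

def IsWalk (G : Set (S × S)) (t : ℕ → S) (k : ℕ) : Prop :=
  ∀ i < k, (t i, t (i + 1)) ∈ G

theorem IsWalk.cons {t : ℕ → S} {k : ℕ} {a : S} (ha : (a, t 0) ∈ G) (ht : IsWalk G t k) :
    IsWalk G (fun | 0 => a | i + 1 => t i) (k + 1) := by
  rintro (_ | i) hi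
  · exact ha
  · exact ht i (by omega)

theorem IsWalk.gpath {t : ℕ → S} {k a b : ℕ} (ht : IsWalk G t k) (hab : a ≤ b)
    (hb : b ≤ k) : GPath G (t a) (t b) :=
  (reflTransGen_of_succ_of_le (fun i j => (t i, t j) ∈ G)
    (fun i hi => ht i (by grind)) hab).lift t fun _ _ => id

theorem exists_walk_of_gpath {a b : S} (h : GPath G a b) :
    ∃ t k, t 0 = a ∧ t k = b ∧ IsWalk G t k := by
  induction h using Relation.ReflTransGen.head_induction_on with
  | refl => exact ⟨fun _ => b, 0, rfl, rfl, by simp [IsWalk]⟩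
  | head hac _ ih =>
    obtain ⟨t, k, rfl, hk, ht⟩ := ih
    exact ⟨_, k + 1, rfl, hk, ht.cons hac⟩

theorem exists_walk_through {a b w : S} (h₁ : GPath G a w) (h₂ : GPath G w b) :
    ∃ t k, t 0 = a ∧ t k = b ∧ IsWalk G t k ∧ ∃ i ≤ k, t i = w := by
  induction h₁ using Relation.ReflTransGen.head_induction_on with
  | refl =>
    obtain ⟨t, k, h0, hk, ht⟩ := exists_walk_of_gpath h₂
    exact ⟨t, k, h0, hk, ht, 0, k.zero_le, h0⟩
  | head hac _ ih =>
    obtain ⟨t, k, rfl, hk, ht, i, hi, hti⟩ := ih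
    exact ⟨_, k + 1, rfl, hk, ht.cons hac, i + 1, by omega, hti⟩

theorem exists_ecycleOn_through_iff {s w : S} :
    (∃ t k, ECycleOn G s t k ∧ ∃ i ≤ k, t i = w) ↔
      ∃ v, (s, v) ∈ G ∧ GPath G v w ∧ GPath G w s := by
  constructor
  · rintro ⟨t, k, ⟨hk, rfl, hks, ht⟩, i, hik, rfl⟩
    have ht' : IsWalk G t k := ht
    refine ⟨t 1, ht 0 hk, ?_, hks ▸ ht'.gpath hik le_rfl⟩
    rcases i.eq_zero_or_pos with rfl | hi
    · exact hks ▸ ht'.gpath hk le_rfl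
    · exact ht'.gpath hi hik
  · rintro ⟨v, hsv, hvw, hws⟩
    obtain ⟨t, k, rfl, hk, ht, i, hi, hti⟩ := exists_walk_through hvw hws
    exact ⟨_, k + 1, ⟨by omega, rfl, hk, ht.cons hsv⟩, i + 1, by omega, hti⟩

theorem ECycleOn.mono {s : S} {t : ℕ → S} {k : ℕ} (hGH : G ⊆ H) (h : ECycleOn G s t k) :
    ECycleOn H s t k :=
  ⟨h.1, h.2.1, h.2.2.1, fun i hi => hGH (h.2.2.2 i hi)⟩

theorem ECycleOn.exists_edge {s : S} {t : ℕ → S} {k : ℕ} (h : ECycleOn G s t k) {j : ℕ}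
    (hj : j ≤ k) : ∃ v, (t j, v) ∈ G := by
  obtain ⟨hk, h0, hks, ht⟩ := h
  rcases hj.lt_or_eq with hj | rfl
  · exact ⟨_, ht j hj⟩
  · exact ⟨_, hks.trans h0.symm ▸ ht 0 hk⟩

def inducedEdges (G : Set (S × S)) (p : Set S) : Set (S × S) :=
  {e | e ∈ G ∧ e.1 ∈ p ∧ e.2 ∈ p}

theorem ECycleOn.induced {s : S} {t : ℕ → S} {k : ℕ} {p : Set S} (h : ECycleOn G s t k)
    (hp : ∀ j ≤ k, t j ∈ p) : ECycleOn (inducedEdges G p) s t k :=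
  ⟨h.1, h.2.1, h.2.2.1, fun i hi => ⟨h.2.2.2 i hi, hp i hi.le, hp (i + 1) hi⟩⟩

def cyclicEdges (G : Set (S × S)) : Set (S × S) :=
  {e | e ∈ G ∧ GPath G e.2 e.1}

theorem gpath_cyclicEdges {a b : S} (h₁ : GPath G a b) (h₂ : GPath G b a) :
    GPath (cyclicEdges G) a b := by
  induction h₁ with
  | refl => exact .refl
  | @tail c d hac hcd ih =>
    exact (ih (.head hcd h₂)).tail ⟨hcd, h₂.trans hac⟩

theorem exists_ecycleOn_cyclicEdges {s v w : S} (hsv : (s, v) ∈ G) (hvw : GPath G v w)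
    (hws : GPath G w s) : ∃ t k, ECycleOn (cyclicEdges G) s t k ∧ ∃ i ≤ k, t i = w :=
  exists_ecycleOn_through_iff.mpr ⟨v, ⟨hsv, hvw.trans hws⟩,
    gpath_cyclicEdges hvw (hws.tail hsv), gpath_cyclicEdges hws (.head hsv hvw)⟩

end Graph

section Sieve

variable {π : S → Option A} {decs incs : A → Set V} {G G' : Set (S × S)}

theorem SieveStep.subset (h : SieveStep π decs incs G G') : G' ⊆ G := by
  obtain ⟨e, -, rfl⟩ := h
  exact Set.sdiff_subset

theorem SieveStep.subset_of_not_removable {K : Set (S × S)} (h : SieveStep π decs incs G G')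
    (hK : K ⊆ G) (hK' : ∀ e ∈ K, ¬ Removable π decs incs G e) : K ⊆ G' := by
  obtain ⟨e, he, rfl⟩ := h
  rintro f hf
  exact ⟨hK hf, fun hfe => hK' f hf (by rwa [Set.mem_singleton_iff.mp hfe])⟩

theorem sieveSteps_subset {n : ℕ} {Gs : ℕ → Set (S × S)}
    (hstep : ∀ i < n, SieveStep π decs incs (Gs i) (Gs (i + 1))) : ∀ i ≤ n, Gs i ⊆ Gs 0
  | 0, _ => le_rfl
  | i + 1, hi => (hstep i hi).subset.trans (sieveSteps_subset hstep i (by omega))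

end Sieve

section Termination

variable {P : FOND S A} {π : S → Option A} {decs incs : A → Set V} {T : Set S}

theorem QNPClosed.exists_avoiding_cycle (hT : QNPClosed P π decs incs T) {s : S}
    (hs : ReachesFrom P π P.init s) (hsT : s ∉ T) :
    ∃ v, (s, v) ∈ inducedEdges (PolicyEdges P π) Tᶜ ∧
      GPath (inducedEdges (PolicyEdges P π) Tᶜ) v s := by
  have h : ¬ ∀ t k, ECycleOn (PolicyEdges P π) s t k → ∃ j ≤ k, t j ∈ T :=
    fun h => hsT (hT s hs (Or.inr (Or.inl h)))
  push Not at h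
  obtain ⟨t, k, hc, hfree⟩ := h
  obtain ⟨v, hsv, hvs, -⟩ :=
    exists_ecycleOn_through_iff.mp ⟨t, k, hc.induced (p := Tᶜ) hfree, 0, k.zero_le, hc.2.1⟩
  exact ⟨v, hsv, hvs⟩

theorem QNPClosed.exists_avoiding_incrementing_cycle (hT : QNPClosed P π decs incs T) {s : S}
    (hs : ReachesFrom P π P.init s) (hsT : s ∉ T) {a : A} {x : V} (ha : π s = some a)
    (hx : x ∈ decs a) :
    ∃ w, (∃ b, π w = some b ∧ x ∈ incs b) ∧
      GPath (inducedEdges (PolicyEdges P π) Tᶜ) s w ∧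
      GPath (inducedEdges (PolicyEdges P π) Tᶜ) w s := by
  have h : ¬ ∀ t k, ECycleOn (PolicyEdges P π) s t k →
      (∃ i ≤ k, ∃ b, π (t i) = some b ∧ x ∈ incs b) → ∃ j ≤ k, t j ∈ T :=
    fun h => hsT (hT s hs (Or.inr (Or.inr ⟨x, ⟨a, ha, hx⟩, h⟩)))
  push Not at h
  obtain ⟨t, k, hc, ⟨i, hi, hinc⟩, hfree⟩ := h
  obtain ⟨v, hsv, hvw, hws⟩ :=
    exists_ecycleOn_through_iff.mp ⟨t, k, hc.induced (p := Tᶜ) hfree, i, hi, rfl⟩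
  exact ⟨t i, hinc, .head hsv hvw, hws⟩

theorem QNPClosed.cyclicEdges_subset_of_sieveStep (hT : QNPClosed P π decs incs T)
    {G G' : Set (S × S)} (hG : cyclicEdges (inducedEdges (PolicyEdges P π) Tᶜ) ⊆ G)
    (h : SieveStep π decs incs G G') :
    cyclicEdges (inducedEdges (PolicyEdges P π) Tᶜ) ⊆ G' := by
  refine h.subset_of_not_removable hG ?_
  rintro ⟨u, v⟩ ⟨huv, hvu⟩ ⟨-, x, ⟨a, ha, hx⟩, hno⟩
  obtain ⟨w, ⟨b, hb, hxb⟩, huw, hwu⟩ :=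
    hT.exists_avoiding_incrementing_cycle huv.1.1 huv.2.1 ha hx
  have hlift : ∀ {c d}, GPath (inducedEdges (PolicyEdges P π) Tᶜ) c d →
      GPath (inducedEdges (PolicyEdges P π) Tᶜ) d c → GPath G c d :=
    fun h₁ h₂ => (gpath_cyclicEdges h₁ h₂).mono hG
  exact hno w (hlift (hvu.trans huw) (hwu.tail huv)) (hlift hwu huw) b hb hxb

theorem qnpTerm_of_gAcyclic {n : ℕ} {Gs : ℕ → Set (S × S)} (h0 : Gs 0 = PolicyEdges P π)
    (hstep : ∀ i < n, SieveStep π decs incs (Gs i) (Gs (i + 1))) (hac : GAcyclic (Gs n))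
    {s : S} (hs : ReachesFrom P π P.init s) : QNPTerm P π decs incs s := by
  intro T hT
  by_contra hsT
  have hK : ∀ i ≤ n, cyclicEdges (inducedEdges (PolicyEdges P π) Tᶜ) ⊆ Gs i := by
    intro i hi
    induction i with
    | zero => exact h0 ▸ fun _ he => he.1.1
    | succ i ih => exact hT.cyclicEdges_subset_of_sieveStep (ih (by omega)) (hstep i hi)
  obtain ⟨v, hsv, hvs⟩ := hT.exists_avoiding_cycle hs hsT
  exact hac s v (hK n le_rfl ⟨hsv, hvs⟩)
    ((gpath_cyclicEdges hvs (.single hsv)).mono (hK n le_rfl))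

theorem gAcyclic_of_qnpTerm {G : Set (S × S)} (hG : G ⊆ PolicyEdges P π)
    (hmax : ∀ G', ¬ SieveStep π decs incs G G')
    (hterm : ∀ s, ReachesFrom P π P.init s → QNPTerm P π decs incs s) : GAcyclic G := by
  let acyclicStates : Set S := {u | ¬ ∃ v, (u, v) ∈ cyclicEdges G}
  have hcycle : ∀ {u v w}, (u, v) ∈ G → GPath G v w → GPath G w u →
      ∃ t k, ECycleOn (PolicyEdges P π) u t k ∧ (∃ i ≤ k, t i = w) ∧
        ∀ j ≤ k, t j ∉ acyclicStates := by
    intro u v w huv hvw hwu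
    obtain ⟨t, k, hc, hw⟩ := exists_ecycleOn_cyclicEdges huv hvw hwu
    exact ⟨t, k, hc.mono fun _ he => hG he.1, hw, fun j hj hjT => hjT (hc.exists_edge hj)⟩
  have hclosed : QNPClosed P π decs incs acyclicStates := by
    intro u _ hrules
    by_contra hu
    obtain ⟨v, huv, hvu⟩ := not_not.mp hu
    obtain ⟨t, k, hc, -, hfree⟩ := hcycle huv hvu .refl
    rcases hrules with hnocycle | hvisit | ⟨x, hdec, hinc⟩
    · exact hnocycle ⟨t, k, hc⟩
    · obtain ⟨j, hj, hjT⟩ := hvisit t k hc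
      exact hfree j hj hjT
    · obtain ⟨w, hvw, hwu, b, hb, hxb⟩ :
          ∃ w, GPath G v w ∧ GPath G w u ∧ ∃ b, π w = some b ∧ x ∈ incs b := by
        by_contra! h
        exact hmax _ ⟨(u, v), ⟨huv, x, hdec, fun w hvw hwu b hb => h w hvw hwu b hb⟩, rfl⟩
      obtain ⟨t, k, hc, ⟨i, hi, rfl⟩, hfree⟩ := hcycle huv hvw hwu
      obtain ⟨j, hj, hjT⟩ := hinc t k hc ⟨i, hi, b, hb, hxb⟩
      exact hfree j hj hjT
  intro s v hsv hvs
  exact hterm s (hG hsv).1 acyclicStates hclosed ⟨v, hsv, hvs⟩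

end Termination

end FondPaper

theorem stmt6_general (S A V : Type)
    (P : FOND S A)
    (π : S → Option A) (decs incs : A → Set V)
    (n : ℕ) (Gs : ℕ → Set (S × S))
    (h0 : Gs 0 = PolicyEdges P π)
    (hstep : ∀ i < n, SieveStep π decs incs (Gs i) (Gs (i + 1)))
    (hmax : ∀ G', ¬ SieveStep π decs incs (Gs n) G') :
    GAcyclic (Gs n) ↔ ∀ s, ReachesFrom P π P.init s → QNPTerm P π decs incs s :=
  ⟨fun hac _ hs => qnpTerm_of_gAcyclic h0 hstep hac hs,
    gAcyclic_of_qnpTerm (h0 ▸ sieveSteps_subset hstep n le_rfl) hmax⟩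

/-- Sieve accepts the policy graph G(P, π) (the graph obtained when no
further edge removal is possible is acyclic) iff every state reachable by π is
QNP-terminating. -/
theorem stmt6 (S A V : Type) [Finite S] [Finite A] [Finite V]
    (P : FOND S A) (hgoal : P.goal.Nonempty)
    (π : S → Option A) (hπ : IsPolicy P π) (decs incs : A → Set V)
    (n : ℕ) (Gs : ℕ → Set (S × S))
    (h0 : Gs 0 = PolicyEdges P π)
    (hstep : ∀ i < n, SieveStep π decs incs (Gs i) (Gs (i + 1)))
    (hmax : ∀ G', ¬ SieveStep π decs incs (Gs n) G') :
    GAcyclic (Gs n) ↔ ∀ s, ReachesFrom P π P.init s → QNPTerm P π decs incs s :=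
  stmt6_general S A V P π decs incs n Gs h0 hstep hmax
end
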